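/- Let p ≥ 3 be odd and suppose the cycle C_m (m ≥ 3) has an edge-magic labeling f. Then the cycle C_{pm} has an edge-magic labeling with valence 3(p−1)m + val(f). -/

import Mathlib

open Finset

/-- Sum of the labels of the two endpoints of an (undirected) edge. -/
def edgeSum (g : ℤ → ℤ) : Sym2 ℤ → ℤ :=
  Sym2.lift ⟨fun u v => g u + g v, fun _ _ => add_comm _ _⟩

/-- `(fv, fe)` is an edge-magic labeling with valence `k` of the graph with vertex set
`Vs ⊆ ℤ` and edge set `E`: the labels form a bijection from `V ∪ E` onto
`[1, |V| + |E|]` and every edge `uv` satisfies `fv u + fe uv + fv v = k`. -/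
def IsEdgeMagicG (Vs : Finset ℤ) (E : Finset (Sym2 ℤ))
    (fv : ℤ → ℤ) (fe : Sym2 ℤ → ℤ) (k : ℤ) : Prop :=
  Vs.image fv ∪ E.image fe = Finset.Icc 1 ((Vs.card : ℤ) + (E.card : ℤ)) ∧
  ∀ u v : ℤ, s(u, v) ∈ E → fv u + fe s(u, v) + fv v = k

/-- The edge set of the cycle `C_n` on the vertex set `[1,n] ⊆ ℤ`. -/
noncomputable def cycleEdges (n : ℕ) : Finset (Sym2 ℤ) :=
  (Finset.Icc (1 : ℤ) (n : ℤ)).image fun i => s(i, if i = (n : ℤ) then 1 else i + 1)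

/-! Write `p = 2k + 1`. Vertex `i` of `C_{pm}` lies over vertex `i mod m` of `C_m` in a layer
`ℓ(i) ∈ [0, 2k]`; it gets the label `f(i mod m) + 2m ℓ(i)`, and the edge from `i` to `i + 1` gets
`f(e) + 2m (3k - ℓ(i) - ℓ(i + 1))` where `e` is the edge below it, so every edge sum grows by
`6km = 3(p - 1)m`. The labels fill `[1, 2pm]` as soon as both `ℓ` and `3k - ℓ(i) - ℓ(i + 1)` take
every value of `[0, 2k]` on each fibre `{r + jm}`.

Take `ℓ(i) = (k + 1) w(i) mod (2k + 1)` for a walk `w` with steps `±1` that advances by `1` or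
`2`, a unit modulo `2k + 1`, every `m` steps. On a fibre both quantities are then affine in `j`
modulo `2k + 1` with unit slope, and `ℓ(i) + ℓ(i + 1)` stays in the window `[k, 3k]` of length
`2k + 1`: as `k + 1` is the inverse of `2`, consecutive layers differ by `±(k + 1)` modulo
`2k + 1`. -/

def cycleSucc (n i : ℤ) : ℤ := if i = n then 1 else i + 1

theorem mem_cycleEdges {n : ℕ} {e : Sym2 ℤ} :
    e ∈ cycleEdges n ↔ ∃ i ∈ Icc (1 : ℤ) n, e = s(i, cycleSucc n i) := by
  simp only [cycleEdges, cycleSucc, mem_image, eq_comm]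

theorem Function.Periodic.apply_cycleSucc {F : ℤ → ℤ} {n : ℤ} (hF : F.Periodic n) (i : ℤ) :
    F (cycleSucc n i) = F (i + 1) := by
  unfold cycleSucc
  split_ifs with h
  · rw [h, add_comm, hF]
  · rfl

/-- For `n ≥ 3` the edges `s(i, i + 1)` of the cycle on `[1, n]` have length one and the
closing edge `s(n, 1)` is longer, so `i` is the smaller end of the former and the larger end of
the latter. -/
def cycleEdgeIndex : Sym2 ℤ → ℤ :=
  Sym2.lift ⟨fun u v => if |u - v| = 1 then min u v else max u v, fun u v => by
    simp only [abs_sub_comm, min_comm, max_comm]⟩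

theorem cycleEdgeIndex_mk {n i : ℤ} (hn : 3 ≤ n) (hi : i ∈ Icc 1 n) :
    cycleEdgeIndex s(i, cycleSucc n i) = i := by
  rw [mem_Icc] at hi
  simp only [cycleEdgeIndex, Sym2.lift_mk, cycleSucc]
  split_ifs <;> simp_all [abs_eq]; omega

theorem card_cycleEdges {n : ℕ} (hn : 3 ≤ n) : (#(cycleEdges n) : ℤ) = n := by
  rw [cycleEdges, card_image_of_injOn, Int.card_Icc_of_le] <;> try omega
  exact Set.LeftInvOn.injOn (f₁' := cycleEdgeIndex) fun i hi =>
    cycleEdgeIndex_mk (by exact_mod_cast hn) hi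

def cycleFold (m i : ℤ) : ℤ := (i - 1) % m + 1

theorem cycleFold_mem {m : ℤ} (hm : 0 < m) (i : ℤ) : cycleFold m i ∈ Icc 1 m := by
  have := Int.emod_nonneg (i - 1) hm.ne'
  have := Int.emod_lt_of_pos (i - 1) hm
  rw [mem_Icc, cycleFold]
  omega

theorem cycleFold_periodic (m : ℤ) : (cycleFold m).Periodic m := by
  intro i
  simp only [cycleFold, add_sub_right_comm, Int.add_emod_right]

theorem cycleFold_of_mem {m r : ℤ} (hr : r ∈ Icc 1 m) : cycleFold m r = r := by
  rw [mem_Icc] at hr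
  rw [cycleFold, Int.emod_eq_of_lt] <;> omega

theorem cycleFold_add_mul {m r : ℤ} (hr : r ∈ Icc 1 m) (j : ℤ) : cycleFold m (r + j * m) = r := by
  have := (cycleFold_periodic m).int_mul j r
  rwa [Int.cast_id, cycleFold_of_mem hr] at this

theorem cycleFold_add_one {m : ℤ} (hm : 0 < m) (i : ℤ) :
    cycleFold m (i + 1) = cycleSucc m (cycleFold m i) := by
  have h0 := Int.emod_nonneg (i - 1) hm.ne'
  have h1 := Int.emod_lt_of_pos (i - 1) hm
  have key : i % m = ((i - 1) % m + 1) % m := by rw [Int.emod_add_emod, sub_add_cancel]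
  rw [cycleSucc]
  split_ifs with h <;> simp only [cycleFold, add_sub_cancel_right, key] at h ⊢
  · rw [h, Int.emod_self, zero_add]
  · rw [Int.emod_eq_of_lt] <;> omega

theorem cycleFold_cycleSucc_mul {m : ℤ} (hm : 0 < m) (P i : ℤ) :
    cycleFold m (cycleSucc (P * m) i) = cycleSucc m (cycleFold m i) := by
  have hP : (cycleFold m).Periodic (P * m) := by
    simpa using (cycleFold_periodic m).int_mul P
  rw [hP.apply_cycleSucc, cycleFold_add_one hm]

theorem card_Icc_one_natCast (n : ℕ) : (#(Icc 1 (n : ℤ)) : ℤ) = n := by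
  rw [Int.card_Icc_of_le _ _ (by omega)]
  ring

theorem isEdgeMagicG_cycle_iff {n : ℕ} (hn : 3 ≤ n) {fv : ℤ → ℤ} {fe : Sym2 ℤ → ℤ} {κ : ℤ} :
    IsEdgeMagicG (Icc 1 (n : ℤ)) (cycleEdges n) fv fe κ ↔
      (∀ x : ℤ, x ∈ Icc 1 (2 * (n : ℤ)) ↔
        (∃ i ∈ Icc 1 (n : ℤ), fv i = x) ∨ ∃ i ∈ Icc 1 (n : ℤ), fe s(i, cycleSucc n i) = x) ∧
      ∀ i ∈ Icc 1 (n : ℤ), fv i + fe s(i, cycleSucc n i) + fv (cycleSucc n i) = κ := by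
  have hedges : ∀ x, (∃ e ∈ cycleEdges n, fe e = x) ↔
      ∃ i ∈ Icc 1 (n : ℤ), fe s(i, cycleSucc n i) = x := fun x => by
    simp only [mem_cycleEdges]
    constructor
    · rintro ⟨_, ⟨i, hi, rfl⟩, hx⟩
      exact ⟨i, hi, hx⟩
    · rintro ⟨i, hi, hx⟩
      exact ⟨_, ⟨i, hi, rfl⟩, hx⟩
  rw [IsEdgeMagicG, card_Icc_one_natCast, card_cycleEdges hn, ← two_mul, Finset.ext_iff]
  simp only [mem_union, mem_image, hedges]
  refine and_congr (forall_congr' fun x => Iff.comm) ⟨fun h i hi => h _ _ ?_, fun h u v huv => ?_⟩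
  · exact mem_cycleEdges.mpr ⟨i, hi, rfl⟩
  · obtain ⟨i, hi, he⟩ := mem_cycleEdges.mp huv
    rcases Sym2.eq_iff.mp he with ⟨rfl, rfl⟩ | ⟨rfl, rfl⟩
    · exact h u hi
    · rw [Sym2.eq_swap, ← h v hi]
      ring

theorem add_mul_mem_Icc {a b x q : ℤ} (hx : x ∈ Icc 1 a) (hq : q ∈ Ico 0 b) :
    x + a * q ∈ Icc 1 (a * b) := by
  rw [mem_Icc] at hx ⊢
  rw [mem_Ico] at hq
  constructor <;> nlinarith

theorem exists_add_mul_of_mem_Icc {a b L : ℤ} (ha : 0 < a) (hL : L ∈ Icc 1 (a * b)) :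
    ∃ x ∈ Icc 1 a, ∃ q ∈ Ico 0 b, x + a * q = L := by
  rw [mem_Icc] at hL
  refine ⟨(L - 1) % a + 1, ?_, (L - 1) / a, ?_, ?_⟩
  · have := Int.emod_nonneg (L - 1) ha.ne'
    have := Int.emod_lt_of_pos (L - 1) ha
    rw [mem_Icc]
    omega
  · rw [mem_Ico, Int.ediv_lt_iff_lt_mul ha]
    exact ⟨Int.ediv_nonneg (by omega) ha.le, by linarith⟩
  · linarith [Int.emod_add_mul_ediv (L - 1) a]

def liftVertexLabel (m : ℤ) (fv t : ℤ → ℤ) (i : ℤ) : ℤ := fv (cycleFold m i) + 2 * m * t i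

def liftEdgeLabel (m : ℤ) (fe : Sym2 ℤ → ℤ) (s : ℤ → ℤ) (e : Sym2 ℤ) : ℤ :=
  fe (e.map (cycleFold m)) + 2 * m * s (cycleEdgeIndex e)

theorem liftEdgeLabel_mk {m P i : ℤ} (hm : 0 < m) (hPm : 3 ≤ P * m) (hi : i ∈ Icc 1 (P * m))
    (fe : Sym2 ℤ → ℤ) (s : ℤ → ℤ) :
    liftEdgeLabel m fe s s(i, cycleSucc (P * m) i) =
      fe s(cycleFold m i, cycleSucc m (cycleFold m i)) + 2 * m * s i := by
  rw [liftEdgeLabel, cycleEdgeIndex_mk hPm hi, Sym2.map_mk, cycleFold_cycleSucc_mul hm]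

theorem IsEdgeMagicG.lift_cycle_mul {m P : ℕ} (hm : 3 ≤ m) (hP : 0 < P) {fv : ℤ → ℤ}
    {fe : Sym2 ℤ → ℤ} {κ : ℤ} (hf : IsEdgeMagicG (Icc 1 (m : ℤ)) (cycleEdges m) fv fe κ)
    {t s : ℤ → ℤ} {c : ℤ}
    (ht : ∀ i ∈ Icc 1 ((P * m : ℕ) : ℤ), t i ∈ Ico 0 (P : ℤ))
    (hs : ∀ i ∈ Icc 1 ((P * m : ℕ) : ℤ), s i ∈ Ico 0 (P : ℤ))
    (ht_surj : ∀ r ∈ Icc 1 (m : ℤ), ∀ w ∈ Ico 0 (P : ℤ), ∃ j ∈ Ico 0 (P : ℤ), t (r + j * m) = w)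
    (hs_surj : ∀ r ∈ Icc 1 (m : ℤ), ∀ w ∈ Ico 0 (P : ℤ), ∃ j ∈ Ico 0 (P : ℤ), s (r + j * m) = w)
    (hsum : ∀ i ∈ Icc 1 ((P * m : ℕ) : ℤ),
      t i + s i + t (cycleSucc ((P * m : ℕ) : ℤ) i) = c) :
    IsEdgeMagicG (Icc 1 ((P * m : ℕ) : ℤ)) (cycleEdges (P * m))
      (liftVertexLabel m fv t) (liftEdgeLabel m fe s) (κ + 2 * m * c) := by
  have hm0 : (0 : ℤ) < m := by omega
  have hPm : 3 ≤ P * m := by nlinarith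
  have hPmZ : (3 : ℤ) ≤ P * m := by exact_mod_cast hPm
  rw [isEdgeMagicG_cycle_iff hm] at hf
  rw [isEdgeMagicG_cycle_iff hPm]
  obtain ⟨hlabels, hmagic⟩ := hf
  push_cast at ht hs hsum ⊢
  have hfibre : ∀ r ∈ Icc 1 (m : ℤ), ∀ j ∈ Ico 0 (P : ℤ), r + j * m ∈ Icc 1 ((P : ℤ) * m) :=
    fun r hr j hj => by simpa [mul_comm] using add_mul_mem_Icc hr hj
  refine ⟨fun L => ⟨fun hL => ?_, ?_⟩, fun i hi => ?_⟩
  · obtain ⟨x, hx, q, hq, rfl⟩ :=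
      exists_add_mul_of_mem_Icc (a := 2 * m) (b := P) (L := L) (by omega)
        (by rwa [mul_assoc, mul_comm (m : ℤ)])
    rcases (hlabels x).mp hx with ⟨r, hr, rfl⟩ | ⟨r, hr, rfl⟩
    · obtain ⟨j, hj, rfl⟩ := ht_surj r hr q hq
      exact Or.inl ⟨r + j * m, hfibre r hr j hj, by rw [liftVertexLabel, cycleFold_add_mul hr]⟩
    · obtain ⟨j, hj, rfl⟩ := hs_surj r hr q hq
      refine Or.inr ⟨r + j * m, hfibre r hr j hj, ?_⟩
      rw [liftEdgeLabel_mk hm0 hPmZ (hfibre r hr j hj), cycleFold_add_mul hr]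
  · have hlabel : ∀ x ∈ Icc 1 (2 * (m : ℤ)), ∀ q ∈ Ico 0 (P : ℤ),
        x + 2 * m * q ∈ Icc 1 (2 * (P * m : ℤ)) := fun x hx q hq => by
      rw [show 2 * ((P : ℤ) * m) = 2 * m * P by ring]
      exact add_mul_mem_Icc hx hq
    rintro (⟨i, hi, rfl⟩ | ⟨i, hi, rfl⟩)
    · exact hlabel _ ((hlabels _).mpr (Or.inl ⟨_, cycleFold_mem hm0 i, rfl⟩)) _ (ht i hi)
    · rw [liftEdgeLabel_mk hm0 hPmZ hi]
      exact hlabel _ ((hlabels _).mpr (Or.inr ⟨_, cycleFold_mem hm0 i, rfl⟩)) _ (hs i hi)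
  · rw [liftEdgeLabel_mk hm0 hPmZ hi, liftVertexLabel, liftVertexLabel,
      cycleFold_cycleSucc_mul hm0, ← hsum i hi, ← hmagic _ (cycleFold_mem hm0 i)]
    ring

theorem emod_eq_or_emod_eq_sub {a p : ℤ} (ha : 0 ≤ a) (hap : a < 2 * p) :
    a < p ∧ a % p = a ∨ p ≤ a ∧ a % p = a - p := by
  rcases lt_or_ge a p with h | h
  · exact Or.inl ⟨h, Int.emod_eq_of_lt ha h⟩
  · exact Or.inr ⟨h, by rw [Int.emod_eq_sub_self_emod, Int.emod_eq_of_lt] <;> omega⟩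

theorem mul_emod_add_mul_emod_mem_Icc {k x y : ℤ} (hk : 0 ≤ k) (hxy : y = x + 1 ∨ y = x - 1) :
    (k + 1) * x % (2 * k + 1) + (k + 1) * y % (2 * k + 1) ∈ Icc k (3 * k) := by
  have h0 := Int.emod_nonneg ((k + 1) * x) (b := 2 * k + 1) (by omega)
  have h1 := Int.emod_lt_of_pos ((k + 1) * x) (b := 2 * k + 1) (by omega)
  rw [mem_Icc]
  rcases hxy with rfl | rfl
  · rw [mul_add, mul_one, ← Int.emod_add_emod]
    rcases emod_eq_or_emod_eq_sub (a := (k + 1) * x % (2 * k + 1) + (k + 1))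
      (p := 2 * k + 1) (by omega) (by omega) with h | h <;> omega
  · rw [show (k + 1) * (x - 1) = (k + 1) * x + k - (2 * k + 1) by ring,
      ← Int.emod_eq_sub_self_emod, ← Int.emod_add_emod]
    rcases emod_eq_or_emod_eq_sub (a := (k + 1) * x % (2 * k + 1) + k)
      (p := 2 * k + 1) (by omega) (by omega) with h | h <;> omega

theorem exists_mem_Ico_eq_of_modEq {p a α β : ℤ} (hp : 0 < p) (hα : IsCoprime α p)
    {f : ℤ → ℤ} (hf : ∀ j, f j ≡ α * j + β [ZMOD p])
    (hrange : ∀ j ∈ Ico 0 p, f j ∈ Ico a (a + p)) {w : ℤ} (hw : w ∈ Ico a (a + p)) :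
    ∃ j ∈ Ico 0 p, f j = w := by
  obtain ⟨u, v, huv⟩ := hα
  have hj : u * (w - β) % p ∈ Ico 0 p :=
    mem_Ico.mpr ⟨Int.emod_nonneg _ hp.ne', Int.emod_lt_of_pos _ hp⟩
  refine ⟨_, hj, ?_⟩
  have hmod : f (u * (w - β) % p) ≡ w [ZMOD p] :=
    calc f (u * (w - β) % p) ≡ α * (u * (w - β) % p) + β [ZMOD p] := hf _
      _ ≡ α * (u * (w - β)) + β [ZMOD p] :=
        ((Int.mod_modEq _ _).mul_left α).add_right β
      _ = w + p * (-(v * (w - β))) := by linear_combination (w - β) * huv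
      _ ≡ w [ZMOD p] := Int.modEq_add_fac_self
  have hfj := mem_Ico.mp (hrange _ hj)
  rw [mem_Ico] at hw
  have := Int.eq_zero_of_abs_lt_dvd hmod.dvd (abs_lt.mpr ⟨by omega, by omega⟩)
  omega

theorem isCoprime_add_one_two_mul_add_one (k : ℤ) : IsCoprime (k + 1) (2 * k + 1) :=
  ⟨2, -1, by ring⟩

/-- A walk with steps `±1` which advances by `m - 2 * ((m - 1) / 2) ∈ {1, 2}` every `m` steps. -/
def zigzag (m i : ℤ) : ℤ := i - 2 * (i * ((m - 1) / 2) / m)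

theorem zigzag_add_one {m : ℤ} (hm : 0 < m) (i : ℤ) :
    zigzag m (i + 1) = zigzag m i + 1 ∨ zigzag m (i + 1) = zigzag m i - 1 := by
  have hc : 0 ≤ (m - 1) / 2 ∧ (m - 1) / 2 ≤ m := by omega
  have hlo := Int.ediv_le_ediv hm (show i * ((m - 1) / 2) ≤ (i + 1) * ((m - 1) / 2) by nlinarith)
  have hhi := Int.ediv_le_ediv hm
    (show (i + 1) * ((m - 1) / 2) ≤ i * ((m - 1) / 2) + 1 * m by nlinarith)
  rw [Int.add_mul_ediv_right _ _ hm.ne'] at hhi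
  unfold zigzag
  omega

theorem zigzag_add_mul {m : ℤ} (hm : m ≠ 0) (i j : ℤ) :
    zigzag m (i + j * m) = zigzag m i + (m - 2 * ((m - 1) / 2)) * j := by
  rw [zigzag, zigzag, add_mul i, mul_right_comm, Int.add_mul_ediv_right _ _ hm]
  ring

theorem isCoprime_zigzag_drift (m k : ℤ) : IsCoprime (m - 2 * ((m - 1) / 2)) (2 * k + 1) := by
  rcases show m - 2 * ((m - 1) / 2) = 1 ∨ m - 2 * ((m - 1) / 2) = 2 by omega with h | h <;>
    rw [h]
  · exact isCoprime_one_left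
  · exact ⟨-k, 1, by ring⟩

def layer (k m i : ℤ) : ℤ := (k + 1) * zigzag m i % (2 * k + 1)

section Layer

variable {k m : ℤ}

theorem layer_mem_Ico (hk : 0 ≤ k) (i : ℤ) : layer k m i ∈ Ico 0 (2 * k + 1) :=
  mem_Ico.mpr ⟨Int.emod_nonneg _ (by omega), Int.emod_lt_of_pos _ (by omega)⟩

theorem layer_periodic (hm : m ≠ 0) (k : ℤ) : (layer k m).Periodic ((2 * k + 1) * m) := by
  intro i
  show _ ≡ _ [ZMOD 2 * k + 1]
  rw [zigzag_add_mul hm, Int.modEq_iff_dvd]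
  exact ⟨-((k + 1) * (m - 2 * ((m - 1) / 2))), by ring⟩

theorem layer_add_layer_add_one_mem_Icc (hk : 0 ≤ k) (hm : 0 < m) (i : ℤ) :
    layer k m i + layer k m (i + 1) ∈ Icc k (3 * k) :=
  mul_emod_add_mul_emod_mem_Icc hk (zigzag_add_one hm i)

theorem layer_add_mul_modEq (hm : m ≠ 0) (r j : ℤ) :
    layer k m (r + j * m) ≡
      (k + 1) * (m - 2 * ((m - 1) / 2)) * j + (k + 1) * zigzag m r [ZMOD 2 * k + 1] := by
  rw [layer, zigzag_add_mul hm]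
  exact (Int.mod_modEq _ _).trans (congrArg (· % _) (by ring))

theorem exists_layer_add_mul_eq (hk : 0 ≤ k) (hm : m ≠ 0) (r : ℤ) {w : ℤ}
    (hw : w ∈ Ico 0 (2 * k + 1)) : ∃ j ∈ Ico 0 (2 * k + 1), layer k m (r + j * m) = w :=
  exists_mem_Ico_eq_of_modEq (by omega)
    ((isCoprime_add_one_two_mul_add_one k).mul_left (isCoprime_zigzag_drift m k))
    (layer_add_mul_modEq hm r) (fun j _ => by rw [zero_add]; exact layer_mem_Ico hk _)
    (by rwa [zero_add])

theorem exists_layer_add_layer_add_mul_eq (hk : 0 ≤ k) (hm : 0 < m) (r : ℤ) {w : ℤ}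
    (hw : w ∈ Ico k (k + (2 * k + 1))) :
    ∃ j ∈ Ico 0 (2 * k + 1), layer k m (r + j * m) + layer k m (r + j * m + 1) = w := by
  have hunit : IsCoprime (2 * (k + 1) * (m - 2 * ((m - 1) / 2))) (2 * k + 1) :=
    ((Int.isCoprime_two_left.mpr (odd_two_mul_add_one k)).mul_left
      (isCoprime_add_one_two_mul_add_one k)).mul_left (isCoprime_zigzag_drift m k)
  refine exists_mem_Ico_eq_of_modEq (β := (k + 1) * (zigzag m r + zigzag m (r + 1))) (by omega)
    hunit (fun j => ?_) (fun j _ => ?_) hw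
  · rw [add_right_comm]
    exact ((layer_add_mul_modEq hm.ne' r j).add (layer_add_mul_modEq hm.ne' (r + 1) j)).trans
      (congrArg (· % _) (by ring))
  · have := mem_Icc.mp (layer_add_layer_add_one_mem_Icc hk hm (r + j * m))
    rw [mem_Ico]
    omega

end Layer

def edgeLayer (k m i : ℤ) : ℤ := 3 * k - layer k m i - layer k m (i + 1)

theorem IsEdgeMagicG.lift_cycle_two_mul_add_one {m : ℕ} (k : ℕ) (hm : 3 ≤ m) {fv : ℤ → ℤ}
    {fe : Sym2 ℤ → ℤ} {κ : ℤ} (hf : IsEdgeMagicG (Icc 1 (m : ℤ)) (cycleEdges m) fv fe κ) :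
    IsEdgeMagicG (Icc 1 (((2 * k + 1) * m : ℕ) : ℤ)) (cycleEdges ((2 * k + 1) * m))
      (liftVertexLabel m fv (layer k m)) (liftEdgeLabel m fe (edgeLayer k m))
      (κ + 2 * m * (3 * k)) := by
  have hP : ((2 * k + 1 : ℕ) : ℤ) = 2 * k + 1 := by push_cast; ring
  have hk : (0 : ℤ) ≤ k := by positivity
  have hm0 : (0 : ℤ) < m := by omega
  refine hf.lift_cycle_mul hm (by omega) (fun i _ => hP ▸ layer_mem_Ico hk i) (fun i _ => ?_)
    (fun r _ w hw => ?_) (fun r _ w hw => ?_) (fun i _ => ?_)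
  · have := mem_Icc.mp (layer_add_layer_add_one_mem_Icc hk hm0 i)
    rw [hP, mem_Ico, edgeLayer]
    omega
  · rw [hP] at hw ⊢
    exact exists_layer_add_mul_eq hk hm0.ne' r hw
  · rw [hP, mem_Ico] at hw
    rw [hP]
    obtain ⟨j, hj, hj_eq⟩ := exists_layer_add_layer_add_mul_eq (w := 3 * k - w) hk hm0 r
      (mem_Ico.mpr ⟨by omega, by omega⟩)
    exact ⟨j, hj, by rw [edgeLayer]; omega⟩
  · have hN : (((2 * k + 1) * m : ℕ) : ℤ) = (2 * k + 1) * m := by push_cast; ring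
    rw [hN, (layer_periodic hm0.ne' k).apply_cycleSucc, edgeLayer]
    ring

theorem stmt18_general (p m : ℕ) (hpodd : Odd p) (hm3 : 3 ≤ m)
    (fv : ℤ → ℤ) (fe : Sym2 ℤ → ℤ) (κ : ℤ)
    (hf : IsEdgeMagicG (Finset.Icc (1 : ℤ) (m : ℤ)) (cycleEdges m) fv fe κ) :
    ∃ gv ge,
      IsEdgeMagicG (Finset.Icc (1 : ℤ) ((p * m : ℕ) : ℤ)) (cycleEdges (p * m)) gv ge
        (3 * ((p : ℤ) - 1) * (m : ℤ) + κ) := by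
  obtain ⟨k, rfl⟩ := hpodd
  have hval : κ + 2 * m * (3 * k) = 3 * (((2 * k + 1 : ℕ) : ℤ) - 1) * m + κ := by
    push_cast
    ring
  exact ⟨_, _, hval ▸ hf.lift_cycle_two_mul_add_one k hm3⟩

/-- Let `p ≥ 3` be odd and suppose the cycle `C_m` (`m ≥ 3`) has an edge-magic labeling
`f`. Then `C_{pm}` has an edge-magic labeling with valence `3(p-1)m + val(f)`. -/
theorem stmt18 (p m : ℕ) (hp3 : 3 ≤ p) (hpodd : Odd p) (hm3 : 3 ≤ m)
    (fv : ℤ → ℤ) (fe : Sym2 ℤ → ℤ) (κ : ℤ)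
    (hf : IsEdgeMagicG (Finset.Icc (1 : ℤ) (m : ℤ)) (cycleEdges m) fv fe κ) :
    ∃ gv ge,
      IsEdgeMagicG (Finset.Icc (1 : ℤ) ((p * m : ℕ) : ℤ)) (cycleEdges (p * m)) gv ge
        (3 * ((p : ℤ) - 1) * (m : ℤ) + κ) :=
  stmt18_general p m hpodd hm3 fv fe κ hf
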